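/- If μ((Γ,∞)) > 0 (displacements greater than Γ are possible in expectation), then Γ is a real number and there exists a finite ϑ > 0 with ϑ·Γ − κ(ϑ) = 0. -/

import Mathlib

open MeasureTheory Filter Topology

/-- The log-Laplace transform of the intensity measure `μ`:
`κ(θ) = log ∫ e^{θ z} μ(dz)` for `θ ≥ 0`, and `κ(θ) = ∞` for `θ < 0`. -/
noncomputable def kappa (μ : Measure ℝ) (θ : ℝ) : EReal :=
  if 0 ≤ θ then (∫⁻ z, ENNReal.ofReal (Real.exp (θ * z)) ∂μ).log else ⊤

/-- The Fenchel dual `κ*(a) = sup_{θ ∈ ℝ} (θ a − κ(θ))`. -/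
noncomputable def kappaStar (μ : Measure ℝ) (a : ℝ) : EReal :=
  ⨆ θ : ℝ, ((θ * a : ℝ) : EReal) - kappa μ θ

/-!
Once `Γ` is known to be a real number `G` (it is `≥ a` whenever `μ [a, ∞) ≥ 1`, and `≤ κ(φ)/φ`),
consider the sets `K c = {θ | κ(θ) ≤ θ c}` for `c > G`. They are nonempty by definition of `Γ`,
decrease as `c ↓ G`, and are closed because `θ ↦ ∫ e^{θ (z - c)} dμ` is lower semicontinuous
(Fatou). Choosing `b > G` with `μ [b, ∞) > 0`, for `c < b` they are also bounded, since
`∫ e^{θ (z - c)} dμ ≥ e^{θ (b - c)} μ [b, ∞) → ∞`. By Cantor's intersection theorem some `ϑ` lies in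
every `K c`, so `κ(ϑ) ≤ ϑ G`; and `ϑ ≠ 0` because `κ(0) = log μ(ℝ) > 0`, so `ϑ G ≤ κ(ϑ)` as well.
-/

open Set
open scoped ENNReal

section Laplace

variable {α : Type*} [MeasurableSpace α] (μ : Measure α)

theorem lowerSemicontinuous_lintegral {X : Type*} [TopologicalSpace X] [FirstCountableTopology X]
    {f : X → α → ℝ≥0∞} (hf_meas : ∀ t, AEMeasurable (f t) μ)
    (hf : ∀ x, LowerSemicontinuous fun t => f t x) :
    LowerSemicontinuous fun t => ∫⁻ x, f t x ∂μ :=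
  lowerSemicontinuous_iff_le_liminf.2 fun t =>
    (lintegral_mono fun x => (hf x).le_liminf t).trans (lintegral_liminf_le' hf_meas)

theorem ofReal_exp_mul_mul_measure_le_lintegral {g : α → ℝ} (hg : AEMeasurable g μ) {θ : ℝ}
    (hθ : 0 ≤ θ) (a : ℝ) :
    ENNReal.ofReal (Real.exp (θ * a)) * μ {x | a ≤ g x} ≤
      ∫⁻ x, ENNReal.ofReal (Real.exp (θ * g x)) ∂μ := by
  refine le_trans ?_ (mul_meas_ge_le_lintegral₀ (by fun_prop) (ENNReal.ofReal (Real.exp (θ * a))))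
  gcongr with x
  exact fun hx => ENNReal.ofReal_le_ofReal (Real.exp_le_exp.2 (mul_le_mul_of_nonneg_left hx hθ))

theorem tendsto_lintegral_exp_mul_atTop {g : α → ℝ} (hg : AEMeasurable g μ) {a : ℝ} (ha : 0 < a)
    (h : μ {x | a ≤ g x} ≠ 0) :
    Tendsto (fun θ : ℝ => ∫⁻ x, ENNReal.ofReal (Real.exp (θ * g x)) ∂μ) atTop (𝓝 ∞) := by
  have hexp : Tendsto (fun θ : ℝ => ENNReal.ofReal (Real.exp (θ * a))) atTop (𝓝 ∞) :=
    ENNReal.tendsto_ofReal_atTop.comp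
      (Real.tendsto_exp_atTop.comp (tendsto_id.atTop_mul_const ha))
  refine tendsto_nhds_top_mono ?_ ((eventually_ge_atTop 0).mono fun θ hθ =>
    ofReal_exp_mul_mul_measure_le_lintegral μ hg hθ a)
  simpa only [ENNReal.top_mul h] using
    ENNReal.Tendsto.mul_const hexp (b := μ {x | a ≤ g x}) (Or.inl ENNReal.top_ne_zero)

end Laplace

theorem exists_gt_measure_Ici_ne_zero {α : Type*} [ConditionallyCompleteLinearOrder α]
    [TopologicalSpace α] [OrderTopology α] [DenselyOrdered α] [NoMaxOrder α]
    [FirstCountableTopology α] [MeasurableSpace α] {μ : Measure α} {x : α}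
    (h : μ (Ioi x) ≠ 0) : ∃ b, x < b ∧ μ (Ici b) ≠ 0 := by
  obtain ⟨u, -, hux, hu⟩ := exists_seq_strictAnti_tendsto x
  rw [← iUnion_Ici_eq_Ioi_of_lt_of_tendsto hux hu, Ne, measure_iUnion_null_iff] at h
  push Not at h
  obtain ⟨n, hn⟩ := h
  exact ⟨u n, hux n, hn⟩

theorem EReal.coe_le_div_coe_iff {θ : ℝ} (hθ : 0 < θ) (c : ℝ) (x : EReal) :
    (c : EReal) ≤ x / θ ↔ ((θ * c : ℝ) : EReal) ≤ x := by
  rw [EReal.le_div_iff_mul_le (by exact_mod_cast hθ) (EReal.coe_ne_top θ), mul_comm,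
    EReal.coe_mul]

theorem EReal.div_coe_lt_coe_iff {θ : ℝ} (hθ : 0 < θ) (c : ℝ) (x : EReal) :
    x / θ < c ↔ x < ((θ * c : ℝ) : EReal) := by
  rw [EReal.div_lt_iff (by exact_mod_cast hθ) (EReal.coe_ne_top θ), mul_comm, EReal.coe_mul]

section Kappa

variable (μ : Measure ℝ)

theorem nonneg_of_kappa_le_coe {θ x : ℝ} (h : kappa μ θ ≤ x) : 0 ≤ θ := by
  by_contra hθ
  rw [kappa, if_neg hθ, top_le_iff] at h
  exact EReal.coe_ne_top x h

theorem kappa_zero : kappa μ 0 = (μ univ).log := by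
  simp [kappa]

theorem coe_le_kappa_iff {θ : ℝ} (hθ : 0 ≤ θ) (x : ℝ) :
    (x : EReal) ≤ kappa μ θ ↔
      ENNReal.ofReal (Real.exp x) ≤ ∫⁻ z, ENNReal.ofReal (Real.exp (θ * z)) ∂μ := by
  rw [kappa, if_pos hθ, ← EReal.exp_le_exp_iff, ENNReal.exp_log, EReal.exp_coe]

theorem kappa_le_coe_iff {θ : ℝ} (hθ : 0 ≤ θ) (x : ℝ) :
    kappa μ θ ≤ x ↔
      ∫⁻ z, ENNReal.ofReal (Real.exp (θ * z)) ∂μ ≤ ENNReal.ofReal (Real.exp x) := by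
  rw [kappa, if_pos hθ, ← EReal.exp_le_exp_iff, ENNReal.exp_log, EReal.exp_coe]

theorem lintegral_exp_mul_sub (θ c : ℝ) :
    ∫⁻ z, ENNReal.ofReal (Real.exp (θ * (z - c))) ∂μ =
      (∫⁻ z, ENNReal.ofReal (Real.exp (θ * z)) ∂μ) * ENNReal.ofReal (Real.exp (-(θ * c))) := by
  rw [← lintegral_mul_const _ (by fun_prop)]
  congr with z
  rw [← ENNReal.ofReal_mul (Real.exp_pos _).le, ← Real.exp_add, mul_sub, sub_eq_add_neg]

theorem kappa_le_coe_mul_iff {θ : ℝ} (hθ : 0 ≤ θ) (c : ℝ) :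
    kappa μ θ ≤ ((θ * c : ℝ) : EReal) ↔
      ∫⁻ z, ENNReal.ofReal (Real.exp (θ * (z - c))) ∂μ ≤ 1 := by
  have hinv : ENNReal.ofReal (Real.exp (θ * c)) * ENNReal.ofReal (Real.exp (-(θ * c))) = 1 := by
    rw [← ENNReal.ofReal_mul (Real.exp_pos _).le, ← Real.exp_add, add_neg_cancel, Real.exp_zero,
      ENNReal.ofReal_one]
  rw [kappa_le_coe_iff μ hθ, lintegral_exp_mul_sub, ← hinv,
    ENNReal.mul_le_mul_iff_left (by simp [Real.exp_pos]) ENNReal.ofReal_ne_top]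

theorem coe_mul_le_kappa_of_one_le_measure_Ici {θ a : ℝ} (hθ : 0 ≤ θ) (ha : 1 ≤ μ (Ici a)) :
    ((θ * a : ℝ) : EReal) ≤ kappa μ θ := by
  rw [coe_le_kappa_iff μ hθ]
  calc ENNReal.ofReal (Real.exp (θ * a)) ≤ ENNReal.ofReal (Real.exp (θ * a)) * μ {z | a ≤ z} :=
        le_mul_of_one_le_right' ha
    _ ≤ _ := ofReal_exp_mul_mul_measure_le_lintegral μ aemeasurable_id hθ a

theorem isClosed_setOf_kappa_le (c : ℝ) :
    IsClosed {θ : ℝ | kappa μ θ ≤ ((θ * c : ℝ) : EReal)} := by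
  have hset : {θ : ℝ | kappa μ θ ≤ ((θ * c : ℝ) : EReal)} =
      Ici 0 ∩ (fun θ => ∫⁻ z, ENNReal.ofReal (Real.exp (θ * (z - c))) ∂μ) ⁻¹' Iic 1 := by
    ext θ
    by_cases hθ : 0 ≤ θ
    · simp only [mem_ofPred_eq, mem_inter_iff, mem_Ici, mem_preimage, mem_Iic, hθ, true_and]
      exact kappa_le_coe_mul_iff μ hθ c
    · rw [mem_ofPred_eq, kappa, if_neg hθ]
      exact iff_of_false (fun h => EReal.coe_ne_top _ (top_le_iff.1 h)) fun h => hθ h.1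
  rw [hset]
  exact isClosed_Ici.inter <| (lowerSemicontinuous_lintegral μ (fun _ => by fun_prop)
    fun z => (ENNReal.continuous_ofReal.comp (by fun_prop)).lowerSemicontinuous).isClosed_preimage 1

theorem isCompact_setOf_kappa_le {b c : ℝ} (hb : μ (Ici b) ≠ 0) (hcb : c < b) :
    IsCompact {θ : ℝ | kappa μ θ ≤ ((θ * c : ℝ) : EReal)} := by
  have hmass : μ {z : ℝ | b - c ≤ z - c} ≠ 0 := by simp only [sub_le_sub_iff_right]; exact hb
  obtain ⟨T, hT⟩ := eventually_atTop.1 <|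
    (tendsto_lintegral_exp_mul_atTop μ (by fun_prop) (sub_pos.2 hcb) hmass).eventually
      (lt_mem_nhds ENNReal.one_lt_top)
  refine Metric.isCompact_of_isClosed_isBounded (isClosed_setOf_kappa_le μ c)
    ((Metric.isBounded_Icc 0 T).subset fun θ hθ => ?_)
  have hθ0 := nonneg_of_kappa_le_coe μ hθ
  rw [mem_ofPred_eq, kappa_le_coe_mul_iff μ hθ0] at hθ
  exact ⟨hθ0, le_of_not_ge fun hTθ => (hT θ hTθ).not_ge hθ⟩

theorem exists_pos_kappa_le_of_forall_lt {G b : ℝ} (hμ : 1 < μ univ) (hb : μ (Ici b) ≠ 0)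
    (hGb : G < b) (h : ∀ c, G < c → ∃ θ, kappa μ θ ≤ ((θ * c : ℝ) : EReal)) :
    ∃ ϑ, 0 < ϑ ∧ kappa μ ϑ ≤ ((ϑ * G : ℝ) : EReal) := by
  have : Nonempty (Ioo G b) := nonempty_Ioo_subtype hGb
  have hmono : Monotone fun c : Ioo G b => {θ : ℝ | kappa μ θ ≤ ((θ * c : ℝ) : EReal)} :=
    fun c c' hcc' θ (hθ : kappa μ θ ≤ _) => hθ.trans <| EReal.coe_le_coe_iff.2 <|
      mul_le_mul_of_nonneg_left hcc'
        (nonneg_of_kappa_le_coe μ hθ)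
  obtain ⟨ϑ, hϑ⟩ := IsCompact.nonempty_iInter_of_directed_nonempty_isCompact_isClosed _
    hmono.directed_ge (fun c => h c c.2.1) (fun c => isCompact_setOf_kappa_le μ hb c.2.2)
    (fun c => isClosed_setOf_kappa_le μ c)
  replace hϑ : ∀ c ∈ Ioo G b, kappa μ ϑ ≤ ((ϑ * c : ℝ) : EReal) :=
    fun c hc => mem_iInter.1 hϑ ⟨c, hc⟩
  have hle : kappa μ ϑ ≤ ((ϑ * G : ℝ) : EReal) := by
    have hclosed : IsClosed {c : ℝ | kappa μ ϑ ≤ ((ϑ * c : ℝ) : EReal)} :=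
      isClosed_le continuous_const (continuous_coe_real_ereal.comp (continuous_const_mul ϑ))
    refine hclosed.closure_subset_iff.2 hϑ ?_
    rw [closure_Ioo hGb.ne]
    exact left_mem_Icc.2 hGb.le
  refine ⟨ϑ, (nonneg_of_kappa_le_coe μ hle).lt_of_ne ?_, hle⟩
  rintro rfl
  rw [kappa_zero, zero_mul, EReal.coe_zero] at hle
  exact (ENNReal.zero_lt_log_iff.2 hμ).not_ge hle

end Kappa

theorem exists_root_of_mass_beyond_speed_general (μ : Measure ℝ)
    (hμ : 1 < μ Set.univ)
    (hφ : ∃ φ : ℝ, 0 < φ ∧ kappa μ φ < ⊤)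
    (Γ : EReal) (hΓ : Γ = ⨅ θ ∈ {θ : ℝ | 0 < θ}, kappa μ θ / (θ : EReal))
    (hmass : 0 < μ {z : ℝ | Γ < (z : EReal)}) :
    (∃ G : ℝ, Γ = (G : EReal)) ∧
    ∃ ϑ : ℝ, 0 < ϑ ∧ (ϑ : EReal) * Γ - kappa μ ϑ = 0 := by
  obtain ⟨φ, hφ0, hφ⟩ := hφ
  obtain ⟨a, ha⟩ : ∃ a, 1 ≤ μ (Ici a) :=
    ((tendsto_measure_Ici_atBot μ).eventually (eventually_gt_nhds hμ)).exists.imp fun _ => le_of_lt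
  have hΓ_ge : (a : EReal) ≤ Γ := hΓ ▸ le_iInf₂ fun θ hθ =>
    (EReal.coe_le_div_coe_iff hθ a _).2 (coe_mul_le_kappa_of_one_le_measure_Ici μ (le_of_lt hθ) ha)
  have hΓ_lt : Γ < ⊤ := hΓ ▸ (iInf₂_le φ hφ0).trans_lt <|
    (EReal.div_lt_iff (by exact_mod_cast hφ0) (EReal.coe_ne_top φ)).2 <| by
      rwa [EReal.top_mul_of_pos (by exact_mod_cast hφ0)]
  lift Γ to ℝ using ⟨hΓ_lt.ne, ne_bot_of_le_ne_bot (EReal.coe_ne_bot a) hΓ_ge⟩ with G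
  refine ⟨⟨G, rfl⟩, ?_⟩
  simp only [EReal.coe_lt_coe_iff] at hmass
  obtain ⟨b, hGb, hb⟩ := exists_gt_measure_Ici_ne_zero hmass.ne'
  obtain ⟨ϑ, hϑ, hle⟩ := exists_pos_kappa_le_of_forall_lt μ hμ hb hGb fun c hc => by
    obtain ⟨θ, hθ, hlt⟩ : ∃ θ > 0, kappa μ θ / θ < c := by
      have hGc : (G : EReal) < c := EReal.coe_lt_coe_iff.2 hc
      simpa only [hΓ, iInf_lt_iff, mem_ofPred_eq, exists_prop] using hGc
    exact ⟨θ, ((EReal.div_coe_lt_coe_iff hθ c _).1 hlt).le⟩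
  have hge : ((ϑ * G : ℝ) : EReal) ≤ kappa μ ϑ :=
    (EReal.coe_le_div_coe_iff hϑ G _).1 (hΓ ▸ iInf₂_le ϑ hϑ)
  refine ⟨ϑ, hϑ, ?_⟩
  rw [le_antisymm hle hge, ← EReal.coe_mul, ← EReal.coe_sub, sub_self, EReal.coe_zero]

/-- If `μ((Γ,∞)) > 0`, where `Γ = inf {κ(θ)/θ : θ > 0}`, then `Γ` is a real
number and there is a finite `ϑ > 0` with `ϑ Γ − κ(ϑ) = 0`. -/
theorem exists_root_of_mass_beyond_speed (μ : Measure ℝ) [IsFiniteMeasure μ]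
    (hμ : 1 < μ Set.univ)
    (hφ : ∃ φ : ℝ, 0 < φ ∧ kappa μ φ < ⊤)
    (Γ : EReal) (hΓ : Γ = ⨅ θ ∈ {θ : ℝ | 0 < θ}, kappa μ θ / (θ : EReal))
    (hmass : 0 < μ {z : ℝ | Γ < (z : EReal)}) :
    (∃ G : ℝ, Γ = (G : EReal)) ∧
    ∃ ϑ : ℝ, 0 < ϑ ∧ (ϑ : EReal) * Γ - kappa μ ϑ = 0 :=
  exists_root_of_mass_beyond_speed_general μ hμ hφ Γ hΓ hmass
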